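/- Let K and K̂ be real symmetric positive semidefinite N × N matrices, λ > 0, and k, k̂ ∈ ℝ^N. Then |kᵀ(K + λI)^{-1}k − k̂ᵀ(K̂ + λI)^{-1}k̂| ≤ ((‖k‖_2 + ‖k̂‖_2)/λ) ‖k − k̂‖_2 + (‖k‖_2² / λ²) ‖K − K̂‖_op, where ‖·‖_op denotes the matrix operator norm. -/

import Mathlib

open Matrix

/-- The Euclidean (ℓ²) norm of a vector in `ℝ^N`. -/
noncomputable def l2norm {N : ℕ} (v : Fin N → ℝ) : ℝ :=
  Real.sqrt (∑ i, v i ^ 2)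

/-- The ℓ²-operator norm (largest singular value) of a real matrix. -/
noncomputable def matOpNorm {N M : ℕ} (A : Matrix (Fin N) (Fin M) ℝ) : ℝ :=
  ‖LinearMap.toContinuousLinearMap (Matrix.toEuclideanLin A)‖

/-!
Write `A = K + λI` and `B = K̂ + λI`. Both are positive definite with `λ‖y‖² ≤ yᵀAy ≤ ‖y‖‖Ay‖`,
so `‖A⁻¹x‖ ≤ ‖x‖/λ`, and likewise for `B`. The resolvent identity `A⁻¹ - B⁻¹ = A⁻¹(B - A)B⁻¹`
splits the difference of quadratic forms as
`kᵀA⁻¹(K̂ - K)B⁻¹k + kᵀB⁻¹(k - k̂) + (k - k̂)ᵀB⁻¹k̂`,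
and Cauchy–Schwarz bounds the three terms by `‖k‖²‖K - K̂‖/λ²`, `‖k‖‖k - k̂‖/λ` and
`‖k - k̂‖‖k̂‖/λ`.
-/

section Algebra

variable {n α : Type*} [Fintype n] [DecidableEq n] [CommRing α]

theorem dotProduct_inv_mulVec_sub_dotProduct_inv_mulVec {A B : Matrix n n α}
    (h : IsUnit A ↔ IsUnit B) (k k' : n → α) :
    k ⬝ᵥ A⁻¹ *ᵥ k - k' ⬝ᵥ B⁻¹ *ᵥ k' =
      k ⬝ᵥ A⁻¹ *ᵥ ((B - A) *ᵥ (B⁻¹ *ᵥ k)) + k ⬝ᵥ B⁻¹ *ᵥ (k - k') + (k - k') ⬝ᵥ B⁻¹ *ᵥ k' := by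
  have hres : A⁻¹ *ᵥ ((B - A) *ᵥ (B⁻¹ *ᵥ k)) = A⁻¹ *ᵥ k - B⁻¹ *ᵥ k := by
    rw [mulVec_mulVec, mulVec_mulVec, ← inv_sub_inv h, sub_mulVec]
  rw [hres]
  simp only [mulVec_sub, dotProduct_sub, sub_dotProduct]
  ring

end Algebra

section Euclidean

variable {M N : ℕ}

theorem l2norm_eq_norm_toLp (v : Fin N → ℝ) : l2norm v = ‖WithLp.toLp 2 v‖ := by
  simp [EuclideanSpace.norm_eq, l2norm, Real.norm_eq_abs, sq_abs]

theorem l2norm_nonneg (v : Fin N → ℝ) : 0 ≤ l2norm v := Real.sqrt_nonneg _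

theorem abs_dotProduct_le_l2norm_mul_l2norm (v w : Fin N → ℝ) :
    |v ⬝ᵥ w| ≤ l2norm v * l2norm w := by
  have h := abs_real_inner_le_norm (WithLp.toLp 2 w) (WithLp.toLp 2 v)
  rwa [EuclideanSpace.inner_toLp_toLp, star_trivial, ← l2norm_eq_norm_toLp,
    ← l2norm_eq_norm_toLp, mul_comm] at h

theorem l2norm_mulVec_le (A : Matrix (Fin M) (Fin N) ℝ) (v : Fin N → ℝ) :
    l2norm (A *ᵥ v) ≤ matOpNorm A * l2norm v := by
  have h := (LinearMap.toContinuousLinearMap (toEuclideanLin A)).le_opNorm (WithLp.toLp 2 v)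
  rwa [LinearMap.coe_toContinuousLinearMap', toLpLin_toLp, toLin'_apply,
    ← l2norm_eq_norm_toLp, ← l2norm_eq_norm_toLp] at h

theorem matOpNorm_nonneg (A : Matrix (Fin M) (Fin N) ℝ) : 0 ≤ matOpNorm A := norm_nonneg _

theorem matOpNorm_sub_comm (A B : Matrix (Fin M) (Fin N) ℝ) :
    matOpNorm (A - B) = matOpNorm (B - A) := by
  rw [matOpNorm, matOpNorm, ← norm_neg, ← map_neg, ← map_neg, neg_sub]

end Euclidean

section Regularized

variable {N : ℕ} {K : Matrix (Fin N) (Fin N) ℝ} {lam : ℝ}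

theorem Matrix.PosSemidef.posDef_add_smul_one (hK : K.PosSemidef) (hlam : 0 < lam) :
    (K + lam • (1 : Matrix (Fin N) (Fin N) ℝ)).PosDef :=
  PosDef.posSemidef_add hK (PosDef.one.smul hlam)

theorem Matrix.PosSemidef.mul_l2norm_sq_le_dotProduct_add_smul_one_mulVec (hK : K.PosSemidef)
    (y : Fin N → ℝ) :
    lam * l2norm y ^ 2 ≤ y ⬝ᵥ (K + lam • (1 : Matrix (Fin N) (Fin N) ℝ)) *ᵥ y := by
  have hKy : 0 ≤ y ⬝ᵥ K *ᵥ y := by simpa using hK.dotProduct_mulVec_nonneg y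
  have hyy : y ⬝ᵥ y = l2norm y ^ 2 := by
    rw [l2norm, Real.sq_sqrt (by positivity), dotProduct]
    simp only [sq]
  rw [add_mulVec, dotProduct_add, smul_mulVec, one_mulVec, dotProduct_smul, hyy, smul_eq_mul]
  linarith

theorem Matrix.PosSemidef.l2norm_inv_add_smul_one_mulVec_le (hK : K.PosSemidef) (hlam : 0 < lam)
    (x : Fin N → ℝ) :
    l2norm ((K + lam • (1 : Matrix (Fin N) (Fin N) ℝ))⁻¹ *ᵥ x) ≤ l2norm x / lam := by
  set A := K + lam • (1 : Matrix (Fin N) (Fin N) ℝ)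
  set y := A⁻¹ *ᵥ x
  have hAy : A *ᵥ y = x := by
    rw [mulVec_mulVec, mul_nonsing_inv A ((hK.posDef_add_smul_one hlam).isUnit.map detMonoidHom),
      one_mulVec]
  have hcoer : lam * l2norm y ^ 2 ≤ l2norm y * l2norm x :=
    calc lam * l2norm y ^ 2 ≤ y ⬝ᵥ A *ᵥ y := hK.mul_l2norm_sq_le_dotProduct_add_smul_one_mulVec y
      _ = y ⬝ᵥ x := by rw [hAy]
      _ ≤ l2norm y * l2norm x := (le_abs_self _).trans (abs_dotProduct_le_l2norm_mul_l2norm y x)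
  rw [le_div_iff₀ hlam]
  rcases (l2norm_nonneg y).eq_or_lt with hzero | hpos
  · rw [← hzero, zero_mul]
    exact l2norm_nonneg x
  · exact le_of_mul_le_mul_left (by linarith) hpos

theorem Matrix.PosSemidef.abs_dotProduct_inv_add_smul_one_mulVec_le (hK : K.PosSemidef)
    (hlam : 0 < lam) (u v : Fin N → ℝ) :
    |u ⬝ᵥ (K + lam • (1 : Matrix (Fin N) (Fin N) ℝ))⁻¹ *ᵥ v| ≤ l2norm u * (l2norm v / lam) :=
  (abs_dotProduct_le_l2norm_mul_l2norm _ _).trans <|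
    mul_le_mul_of_nonneg_left (hK.l2norm_inv_add_smul_one_mulVec_le hlam v) (l2norm_nonneg u)

end Regularized

/-- perturbation bound for the kernel-ridge posterior variance term:
for real symmetric positive semidefinite `K, K̂`, `λ > 0` and vectors `k, k̂`,
`|kᵀ(K + λI)⁻¹k - k̂ᵀ(K̂ + λI)⁻¹k̂|
  ≤ ((‖k‖₂ + ‖k̂‖₂)/λ) ‖k - k̂‖₂ + (‖k‖₂²/λ²) ‖K - K̂‖_op`. -/
theorem stmt_14 {N : ℕ} (K Khat : Matrix (Fin N) (Fin N) ℝ)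
    (hK : K.PosSemidef) (hKhat : Khat.PosSemidef)
    (lam : ℝ) (hlam : 0 < lam) (k khat : Fin N → ℝ) :
    |k ⬝ᵥ (K + lam • (1 : Matrix (Fin N) (Fin N) ℝ))⁻¹.mulVec k -
        khat ⬝ᵥ (Khat + lam • (1 : Matrix (Fin N) (Fin N) ℝ))⁻¹.mulVec khat|
      ≤ ((l2norm k + l2norm khat) / lam) * l2norm (k - khat) +
        (l2norm k ^ 2 / lam ^ 2) * matOpNorm (K - Khat) := by
  set B := Khat + lam • (1 : Matrix (Fin N) (Fin N) ℝ)
  have hunits : IsUnit (K + lam • 1) ↔ IsUnit B :=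
    iff_of_true (hK.posDef_add_smul_one hlam).isUnit (hKhat.posDef_add_smul_one hlam).isUnit
  have hBA : B - (K + lam • 1) = Khat - K := add_sub_add_right_eq_sub _ _ _
  have hperturb : l2norm ((Khat - K) *ᵥ (B⁻¹ *ᵥ k)) ≤ matOpNorm (K - Khat) * (l2norm k / lam) := by
    rw [matOpNorm_sub_comm]
    exact (l2norm_mulVec_le _ _).trans <| mul_le_mul_of_nonneg_left
      (hKhat.l2norm_inv_add_smul_one_mulVec_le hlam k) (matOpNorm_nonneg _)
  rw [dotProduct_inv_mulVec_sub_dotProduct_inv_mulVec hunits, hBA]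
  calc _ ≤ l2norm k * (l2norm ((Khat - K) *ᵥ (B⁻¹ *ᵥ k)) / lam)
        + l2norm k * (l2norm (k - khat) / lam) + l2norm (k - khat) * (l2norm khat / lam) :=
      (abs_add_three _ _ _).trans <| add_le_add_three
        (hK.abs_dotProduct_inv_add_smul_one_mulVec_le hlam _ _)
        (hKhat.abs_dotProduct_inv_add_smul_one_mulVec_le hlam _ _)
        (hKhat.abs_dotProduct_inv_add_smul_one_mulVec_le hlam _ _)
    _ ≤ l2norm k * (matOpNorm (K - Khat) * (l2norm k / lam) / lam)
        + l2norm k * (l2norm (k - khat) / lam) + l2norm (k - khat) * (l2norm khat / lam) := by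
      gcongr
      exact l2norm_nonneg k
    _ = _ := by
      field_simp
      ring
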